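/- arXiv:1910.03653 — 2 statements merged into one kernel-verified Lean document; each statement's English description precedes it below -/
import Mathlib

section
/- In the setting below, let t < s in [0,T] and let x, x' ∈ ℝ^{nd} with d(x,x') ≤ 1, and let θ_{t,·}(x) and θ_{t,·}(x') be any flows started from x and x' at time t. Then there exists a constant C ≥ 1, depending only on n, d, α, β, the matrix A and the Hölder constant K of F (and not on t, s, x, x'), such that for every i ∈ {1,…,n}: |(θ_{t,s}(x) − θ_{t,s}(x'))_i| ≤ C [ (s−t)^{(1+α(i−1))/α} + d(x,x')^{1+α(i−1)} ]. -/
open MeasureTheory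

/-- The `i`-th d-dimensional block of a point of `ℝ^{nd}`, as a vector of the Euclidean
space `ℝ^d`. -/
noncomputable def blkOf (n d : ℕ) (x : Fin n × Fin d → ℝ) (i : Fin n) :
    EuclideanSpace ℝ (Fin d) :=
  (EuclideanSpace.equiv (Fin d) ℝ).symm (fun a => x (i, a))

/-- The anisotropic distance `d(x,y) = Σ_j |(x-y)_j|^{1/(1+α(j-1))}` on `ℝ^{nd}`
(`j : Fin n` is 0-indexed, so the exponent reads `1/(1+α j)`). -/
noncomputable def anisoDist (n d : ℕ) (α : ℝ) (x y : Fin n × Fin d → ℝ) : ℝ :=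
  ∑ j : Fin n, ‖blkOf n d (x - y) j‖ ^ (1 / (1 + α * (j : ℕ)))

/-- `θ` is a flow started from `x` at time `t`, i.e. a continuous solution on `[t,T]` of
`θ s = x + ∫_t^s (A θ_v + F(v, θ_v)) dv`. -/
def IsFlow (n d : ℕ) (T : ℝ) (A : Matrix (Fin n × Fin d) (Fin n × Fin d) ℝ)
    (F : ℝ → (Fin n × Fin d → ℝ) → (Fin n × Fin d → ℝ)) (t : ℝ)
    (x : Fin n × Fin d → ℝ) (θ : ℝ → Fin n × Fin d → ℝ) : Prop :=
  ContinuousOn θ (Set.Icc t T) ∧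
  ∀ s ∈ Set.Icc t T, θ s = x + ∫ v in t..s, (A.mulVec (θ v) + F v (θ v))

/-!
Write `δ = θ - θ'` and `q k = 1 + α k`. Integrating the equation, block `i` of `δ` grows from
`(x - x')_i` by at most `r - t` times the drift, which the sub-diagonal structure of `A` and the
Hölder bounds on `F` control by `M ^ (q i - α)` and `M ^ holderExp α β i` as soon as every block
`k` of `δ` is at most `M ^ q k`. The ansatz `‖δ_k(v)‖ ≤ (C₀ H) ^ q k` with
`H = (v - t) ^ (1/α) + d(x, x')` is then self-improving for large `C₀`: since `r - t ≤ H ^ α` and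
both drift exponents lie in `[q i - α, q i - γ]` for `γ = min (α - β) (1 - β) > 0`, each drift
contribution is at most `(C₀ H) ^ q i / 4` (using `H ≤ 3`). A continuity argument in time, with
`d(x, x')` replaced by `d(x, x') + ε` so that the ansatz holds strictly at `v = t`, propagates it
over `[t, s]`.
-/

open Set Filter Topology
open scoped Matrix

theorem rpow_div_le_of_le_rpow {u X e q : ℝ} (hu : 0 ≤ u) (hX : 0 ≤ X) (he : 0 ≤ e) (hq : 0 < q)
    (h : u ≤ X ^ q) : u ^ (e / q) ≤ X ^ e :=
  calc u ^ (e / q) ≤ (X ^ q) ^ (e / q) := Real.rpow_le_rpow hu h (div_nonneg he hq.le)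
    _ = X ^ e := by rw [← Real.rpow_mul hX, mul_div_cancel₀ e hq.ne']

theorem mul_mul_rpow_le_rpow_div_four {τ H α c C₀ γ p q : ℝ} (hτH : τ ≤ H ^ α)
    (hH : 0 < H) (hH3 : H ≤ 3) (hC₀ : 1 ≤ C₀) (hc : 0 ≤ c) (hcC₀ : 12 * c ≤ C₀ ^ γ)
    (hpl : q ≤ α + p) (hpu : p ≤ q - γ) (hp1 : α + p ≤ q + 1) :
    τ * (c * (C₀ * H) ^ p) ≤ (C₀ * H) ^ q / 4 := by
  have hC₀p : 12 * (c * C₀ ^ p) ≤ C₀ ^ q :=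
    calc 12 * (c * C₀ ^ p) ≤ C₀ ^ γ * C₀ ^ p := by rw [← mul_assoc]; gcongr
      _ = C₀ ^ (γ + p) := (Real.rpow_add (by linarith) γ p).symm
      _ ≤ C₀ ^ q := Real.rpow_le_rpow_of_exponent_le hC₀ (by linarith)
  have hHp : H ^ α * H ^ p ≤ 3 * H ^ q :=
    calc H ^ α * H ^ p = H ^ (α + p - q) * H ^ q := by
          rw [← Real.rpow_add hH, ← Real.rpow_add hH, sub_add_cancel]
      _ ≤ 3 ^ (α + p - q) * H ^ q := by gcongr
      _ ≤ 3 ^ (1 : ℝ) * H ^ q := by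
          gcongr
          · norm_num
          · linarith
      _ = 3 * H ^ q := by rw [Real.rpow_one]
  calc τ * (c * (C₀ * H) ^ p) ≤ H ^ α * (c * (C₀ * H) ^ p) := by gcongr
    _ = c * C₀ ^ p * (H ^ α * H ^ p) := by
        rw [Real.mul_rpow (by linarith) hH.le]
        ring
    _ ≤ c * C₀ ^ p * (3 * H ^ q) := by gcongr
    _ ≤ C₀ ^ q * H ^ q / 4 := by nlinarith [Real.rpow_nonneg hH.le q]
    _ = (C₀ * H) ^ q / 4 := by rw [Real.mul_rpow (by linarith) hH.le]

theorem rpow_add_mul_lt_rpow {τ H α γ c C₀ D p q : ℝ} (hτH : τ ≤ H ^ α)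
    (hH : 0 < H) (hH3 : H ≤ 3) (hD : 0 ≤ D) (hDH : D ≤ H) (hq : 1 ≤ q) (hC₀ : 4 ≤ C₀)
    (hc : 0 ≤ c) (hcC₀ : 12 * c ≤ C₀ ^ γ) (hγα : γ ≤ α) (hpl : q ≤ α + p) (hpu : p ≤ q - γ)
    (hp1 : α + p ≤ q + 1) :
    D ^ q + τ * (c * ((C₀ * H) ^ (q - α) + (C₀ * H) ^ p)) < (C₀ * H) ^ q := by
  have hlin := mul_mul_rpow_le_rpow_div_four (p := q - α) (q := q) hτH hH hH3 (by linarith) hc hcC₀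
    (by linarith) (by linarith) (by linarith)
  have hnl := mul_mul_rpow_le_rpow_div_four hτH hH hH3 (by linarith) hc hcC₀ hpl hpu hp1
  have hDq : D ^ q ≤ (C₀ * H) ^ q / 4 :=
    calc D ^ q ≤ H ^ q := by gcongr
      _ ≤ C₀ ^ q * H ^ q / 4 := by
          have : 4 ≤ C₀ ^ q := hC₀.trans (Real.self_le_rpow_of_one_le (by linarith) hq)
          nlinarith [Real.rpow_nonneg hH.le q]
      _ = (C₀ * H) ^ q / 4 := by rw [Real.mul_rpow (by linarith) hH.le]
  have hpos : 0 < (C₀ * H) ^ q := by positivity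
  linarith [mul_add τ (c * (C₀ * H) ^ (q - α)) (c * (C₀ * H) ^ p),
    mul_add c ((C₀ * H) ^ (q - α)) ((C₀ * H) ^ p)]

theorem mul_add_rpow_le {C σ D q Q : ℝ} (hC : 1 ≤ C) (hσ : 0 ≤ σ) (hD : 0 ≤ D) (hq : 1 ≤ q)
    (hqQ : q ≤ Q) : (C * (σ + D)) ^ q ≤ (2 * C) ^ Q * (σ ^ q + D ^ q) := by
  have hsum : (σ + D) ^ q ≤ 2 ^ q * (σ ^ q + D ^ q) := by
    lift σ to NNReal using hσ
    lift D to NNReal using hD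
    have h := NNReal.rpow_add_le_mul_rpow_add_rpow σ D hq
    have h2 : (2 : NNReal) ^ (q - 1) ≤ 2 ^ q :=
      NNReal.rpow_le_rpow_of_exponent_le one_le_two (by linarith)
    exact_mod_cast h.trans (mul_le_mul_of_nonneg_right h2 zero_le)
  calc (C * (σ + D)) ^ q = C ^ q * (σ + D) ^ q := Real.mul_rpow (by linarith) (by positivity)
    _ ≤ C ^ q * (2 ^ q * (σ ^ q + D ^ q)) := by gcongr
    _ = (2 * C) ^ q * (σ ^ q + D ^ q) := by
        rw [Real.mul_rpow zero_le_two (by linarith)]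
        ring
    _ ≤ (2 * C) ^ Q * (σ ^ q + D ^ q) := by
        gcongr
        linarith

section Comparison

variable {ι : Type*} [Finite ι] {u : ℝ → ι → ℝ} {q p : ι → ℝ} {α γ c C₀ D t s : ℝ}

theorem forall_le_of_bootstrap {g : ℝ → ι → ℝ}
    (hu : ∀ k, ContinuousOn (fun v => u v k) (Icc t s))
    (hg : ∀ k, ContinuousOn (fun v => g v k) (Icc t s))
    (ht : ∀ k, u t k ≤ g t k)
    (hstep : ∀ r ∈ Icc t s, (∀ v ∈ Icc t r, ∀ k, u v k ≤ g v k) → ∀ k, u r k < g r k) :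
    ∀ v ∈ Icc t s, ∀ k, u v k ≤ g v k := by
  by_contra! hbad
  obtain ⟨v, hv, k, hk⟩ := hbad
  set B := ⋃ k, {r ∈ Icc t s | g r k ≤ u r k}
  have hBc : IsClosed B := isClosed_iUnion_of_finite fun k => isClosed_Icc.isClosed_le (hg k) (hu k)
  have hBbdd : BddBelow B := ⟨t, fun r hr => by obtain ⟨_, ⟨hr, _⟩⟩ := mem_iUnion.1 hr; exact hr.1⟩
  have hr₀ : sInf B ∈ B := hBc.csInf_mem ⟨v, mem_iUnion.2 ⟨k, hv, hk.le⟩⟩ hBbdd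
  obtain ⟨k₀, hr₀s, hk₀⟩ := mem_iUnion.1 hr₀
  have hbefore : ∀ w ∈ Ico t (sInf B), ∀ k, u w k ≤ g w k := fun w hw k =>
    le_of_not_ge fun h =>
      (csInf_le hBbdd (mem_iUnion.2 ⟨k, ⟨hw.1, hw.2.le.trans hr₀s.2⟩, h⟩)).not_gt hw.2
  have hupto : ∀ w ∈ Icc t (sInf B), ∀ k, u w k ≤ g w k := by
    intro w hw k
    rcases hw.2.lt_or_eq with hlt | rfl
    · exact hbefore w ⟨hw.1, hlt⟩ k
    rcases hw.1.eq_or_lt with heq | htw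
    · exact heq ▸ ht k
    have hclosed := isClosed_Icc.isClosed_le (hu k) (hg k)
    have hsub : Ico t (sInf B) ⊆ {r ∈ Icc t s | u r k ≤ g r k} := fun w' hw' =>
      ⟨⟨hw'.1, hw'.2.le.trans hr₀s.2⟩, hbefore w' hw' k⟩
    refine (closure_minimal hsub hclosed ?_).2
    rw [closure_Ico htw.ne]
    exact ⟨htw.le, le_rfl⟩
  exact (hstep _ hr₀s hupto k₀).not_ge hk₀

theorem le_rpow_of_increment_le_of_pos (hα : 0 < α) (hst : s - t ≤ 1) (hD : 0 < D) (hD2 : D ≤ 2)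
    (hq : ∀ k, 1 ≤ q k) (hγα : γ ≤ α) (hpl : ∀ k, q k ≤ α + p k) (hpu : ∀ k, p k ≤ q k - γ)
    (hp1 : ∀ k, α + p k ≤ q k + 1) (hc : 0 ≤ c) (hcC₀ : 12 * c ≤ C₀ ^ γ) (hC₀ : 4 ≤ C₀)
    (hu : ∀ k, ContinuousOn (fun v => u v k) (Icc t s)) (hut : ∀ k, u t k ≤ D ^ q k)
    (hincr : ∀ r ∈ Icc t s, ∀ M, 0 ≤ M → (∀ v ∈ Icc t r, ∀ k, u v k ≤ M ^ q k) →
      ∀ i, u r i ≤ u t i + (r - t) * (c * (M ^ (q i - α) + M ^ p i))) :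
    ∀ v ∈ Icc t s, ∀ i, u v i ≤ (C₀ * ((v - t) ^ α⁻¹ + D)) ^ q i := by
  have hscale_mono : ∀ v r, t ≤ v → v ≤ r → (v - t) ^ α⁻¹ ≤ (r - t) ^ α⁻¹ := fun v r hv hvr =>
    Real.rpow_le_rpow (sub_nonneg.2 hv) (by linarith) (by positivity)
  refine forall_le_of_bootstrap hu (fun k => ?_) (fun k => ?_) fun r hr hbound i => ?_
  · refine (continuousOn_const.mul (ContinuousOn.add ?_ continuousOn_const)).rpow_const
      fun _ _ => Or.inr (by linarith [hq k])
    exact (continuousOn_id.sub continuousOn_const).rpow_const fun _ _ => Or.inr (by positivity)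
  · rw [sub_self, Real.zero_rpow (inv_ne_zero hα.ne'), zero_add]
    exact (hut k).trans (Real.rpow_le_rpow hD.le (by nlinarith) (by linarith [hq k]))
  have hρ : 0 ≤ (r - t) ^ α⁻¹ := Real.rpow_nonneg (sub_nonneg.2 hr.1) _
  set H := (r - t) ^ α⁻¹ + D
  have hH : 0 < H := by positivity
  have hτH : r - t ≤ H ^ α :=
    calc r - t = ((r - t) ^ α⁻¹) ^ α := by
          rw [← Real.rpow_mul (sub_nonneg.2 hr.1), inv_mul_cancel₀ hα.ne', Real.rpow_one]
      _ ≤ H ^ α := by gcongr; linarith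
  have hH3 : H ≤ 3 := by
    have : (r - t) ^ α⁻¹ ≤ 1 :=
      Real.rpow_le_one (sub_nonneg.2 hr.1) (by linarith [hr.2]) (by positivity)
    linarith
  have hmono : ∀ v ∈ Icc t r, ∀ k, u v k ≤ (C₀ * H) ^ q k := fun v hv k =>
    (hbound v hv k).trans <| Real.rpow_le_rpow
      (by have := Real.rpow_nonneg (sub_nonneg.2 hv.1) α⁻¹; positivity)
      (by gcongr; exact add_le_add_left (hscale_mono v r hv.1 hv.2) D) (by linarith [hq k])
  calc u r i ≤ u t i + (r - t) * (c * ((C₀ * H) ^ (q i - α) + (C₀ * H) ^ p i)) :=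
        hincr r hr (C₀ * H) (by positivity) hmono i
    _ ≤ D ^ q i + (r - t) * (c * ((C₀ * H) ^ (q i - α) + (C₀ * H) ^ p i)) := by
        gcongr
        exact hut i
    _ < (C₀ * H) ^ q i := rpow_add_mul_lt_rpow hτH hH hH3 hD.le (by linarith) (hq i) hC₀ hc hcC₀
        hγα (hpl i) (hpu i) (hp1 i)

theorem le_rpow_of_increment_le (hα : 0 < α) (hst : s - t ≤ 1) (hD : 0 ≤ D) (hD1 : D ≤ 1)
    (hq : ∀ k, 1 ≤ q k) (hγα : γ ≤ α) (hpl : ∀ k, q k ≤ α + p k) (hpu : ∀ k, p k ≤ q k - γ)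
    (hp1 : ∀ k, α + p k ≤ q k + 1) (hc : 0 ≤ c) (hcC₀ : 12 * c ≤ C₀ ^ γ) (hC₀ : 4 ≤ C₀)
    (hu : ∀ k, ContinuousOn (fun v => u v k) (Icc t s)) (hut : ∀ k, u t k ≤ D ^ q k)
    (hincr : ∀ r ∈ Icc t s, ∀ M, 0 ≤ M → (∀ v ∈ Icc t r, ∀ k, u v k ≤ M ^ q k) →
      ∀ i, u r i ≤ u t i + (r - t) * (c * (M ^ (q i - α) + M ^ p i))) :
    ∀ v ∈ Icc t s, ∀ i, u v i ≤ (C₀ * ((v - t) ^ α⁻¹ + D)) ^ q i := by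
  intro v hv i
  have hε : ∀ ε ∈ Ioc (0 : ℝ) 1, u v i ≤ (C₀ * ((v - t) ^ α⁻¹ + (D + ε))) ^ q i := fun ε hε =>
    le_rpow_of_increment_le_of_pos hα hst (by linarith [hε.1]) (by linarith [hε.2]) hq hγα hpl
      hpu hp1 hc hcC₀ hC₀ hu
      (fun k => (hut k).trans (Real.rpow_le_rpow hD (by linarith [hε.1]) (by linarith [hq k])))
      hincr v hv i
  have hcont : Continuous fun ε => (C₀ * ((v - t) ^ α⁻¹ + (D + ε))) ^ q i :=
    (continuous_const.mul (continuous_const.add (continuous_const.add continuous_id))).rpow_const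
      fun _ => Or.inr (by linarith [hq i])
  have hlim := (hcont.tendsto 0).mono_left (nhdsWithin_le_nhds (s := Ioi 0))
  rw [add_zero] at hlim
  exact ge_of_tendsto hlim (eventually_of_mem (Ioc_mem_nhdsGT one_pos) hε)

end Comparison

theorem EuclideanSpace.norm_le_sum_abs {ι : Type*} [Fintype ι] (v : EuclideanSpace ℝ ι) :
    ‖v‖ ≤ ∑ a, |v a| := by
  rw [EuclideanSpace.norm_eq, Real.sqrt_le_left (Finset.sum_nonneg fun a _ => abs_nonneg _)]
  simpa only [Real.norm_eq_abs] using
    Finset.sum_sq_le_sq_sum_of_nonneg fun a _ => abs_nonneg (v a)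

section Blocks

variable {n d : ℕ}

noncomputable def blkOfCLM (n d : ℕ) (i : Fin n) :
    (Fin n × Fin d → ℝ) →L[ℝ] EuclideanSpace ℝ (Fin d) :=
  LinearMap.toContinuousLinearMap
    { toFun := fun x => blkOf n d x i
      map_add' := fun _ _ => rfl
      map_smul' := fun _ _ => rfl }

@[simp]
theorem blkOfCLM_apply (i : Fin n) (x : Fin n × Fin d → ℝ) : blkOfCLM n d i x = blkOf n d x i :=
  rfl

theorem blkOf_add (x y : Fin n × Fin d → ℝ) (i : Fin n) :
    blkOf n d (x + y) i = blkOf n d x i + blkOf n d y i :=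
  rfl

theorem norm_blkOf_mulVec_le {A : Matrix (Fin n × Fin d) (Fin n × Fin d) ℝ}
    (hA : ∀ (i j : Fin n) (a b : Fin d), (j : ℕ) + 1 ≠ (i : ℕ) → A (i, a) (j, b) = 0)
    {w : Fin n × Fin d → ℝ} {i : Fin n} {M : ℝ} (hM : 0 ≤ M)
    (hw : ∀ j : Fin n, (j : ℕ) + 1 = i → ‖blkOf n d w j‖ ≤ M) :
    ‖blkOf n d (A *ᵥ w) i‖ ≤ (∑ p, ∑ p', |A p p'|) * M := by
  have hrow : ∀ a, |(A *ᵥ w) (i, a)| ≤ (∑ p, |A (i, a) p|) * M := by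
    intro a
    rw [Matrix.mulVec, dotProduct, Finset.sum_mul]
    refine (Finset.abs_sum_le_sum_abs _ _).trans (Finset.sum_le_sum fun ⟨j, b⟩ _ => ?_)
    rw [abs_mul]
    by_cases hj : (j : ℕ) + 1 = i
    · exact mul_le_mul_of_nonneg_left ((PiLp.norm_apply_le (blkOf n d w j) b).trans (hw j hj))
        (abs_nonneg _)
    · simp [hA i j a b hj]
  calc ‖blkOf n d (A *ᵥ w) i‖ ≤ ∑ a, |(A *ᵥ w) (i, a)| := EuclideanSpace.norm_le_sum_abs _
    _ ≤ ∑ a, (∑ p, |A (i, a) p|) * M := Finset.sum_le_sum fun a _ => hrow a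
    _ ≤ (∑ p, ∑ p', |A p p'|) * M := by
      rw [← Finset.sum_mul, Fintype.sum_prod_type]
      gcongr
      exact Finset.single_le_sum (f := fun j => ∑ a, ∑ p, |A (j, a) p|)
        (fun _ _ => by positivity) (Finset.mem_univ i)

theorem anisoDist_nonneg (α : ℝ) (x y : Fin n × Fin d → ℝ) : 0 ≤ anisoDist n d α x y :=
  Finset.sum_nonneg fun _ _ => Real.rpow_nonneg (norm_nonneg _) _

theorem norm_blkOf_sub_le_anisoDist_rpow {α : ℝ} (hα : 0 ≤ α) (x y : Fin n × Fin d → ℝ)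
    (k : Fin n) : ‖blkOf n d (x - y) k‖ ≤ anisoDist n d α x y ^ (1 + α * (k : ℕ)) := by
  have hq : 0 < 1 + α * (k : ℕ) := by positivity
  have hk : ‖blkOf n d (x - y) k‖ ^ (1 / (1 + α * (k : ℕ))) ≤ anisoDist n d α x y :=
    Finset.single_le_sum (f := fun j : Fin n => ‖blkOf n d (x - y) j‖ ^ (1 / (1 + α * (j : ℕ))))
      (fun _ _ => Real.rpow_nonneg (norm_nonneg _) _) (Finset.mem_univ k)
  calc ‖blkOf n d (x - y) k‖
      = (‖blkOf n d (x - y) k‖ ^ (1 / (1 + α * (k : ℕ)))) ^ (1 + α * (k : ℕ)) := by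
        rw [← Real.rpow_mul (norm_nonneg _), one_div_mul_cancel hq.ne', Real.rpow_one]
    _ ≤ anisoDist n d α x y ^ (1 + α * (k : ℕ)) := by gcongr

end Blocks

/-- The power of the scale `M` in the Hölder hypothesis on block `i` of `F` once every block `k`
of the increment is at most `M ^ (1 + α k)`; block `0` has its own hypothesis. -/
noncomputable def holderExp (α β : ℝ) (i : ℕ) : ℝ :=
  if i = 0 then β else 1 + α * ((i : ℝ) - 1) + β

theorem holderExp_nonneg {α β : ℝ} (hα : 0 ≤ α) (hβ : 0 ≤ β) (i : ℕ) : 0 ≤ holderExp α β i := by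
  unfold holderExp
  split_ifs with hi
  · exact hβ
  · have : (1 : ℝ) ≤ i := by exact_mod_cast Nat.one_le_iff_ne_zero.2 hi
    nlinarith

theorem le_add_holderExp {α β : ℝ} (hαβ : 1 ≤ α + β) (hβ : 0 ≤ β) (i : ℕ) :
    1 + α * i ≤ α + holderExp α β i := by
  unfold holderExp
  split_ifs with hi
  · rw [hi, Nat.cast_zero, mul_zero]
    linarith
  · linarith

theorem holderExp_le_sub {α β γ : ℝ} (hγ : γ ≤ α - β) (hγ' : γ ≤ 1 - β) (i : ℕ) :
    holderExp α β i ≤ 1 + α * i - γ := by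
  unfold holderExp
  split_ifs with hi
  · rw [hi, Nat.cast_zero, mul_zero]
    linarith
  · linarith

theorem add_holderExp_le {α β : ℝ} (hαβ : α + β ≤ 2) (hβ : β ≤ 1) (i : ℕ) :
    α + holderExp α β i ≤ 1 + α * i + 1 := by
  unfold holderExp
  split_ifs with hi
  · rw [hi, Nat.cast_zero, mul_zero]
    linarith
  · linarith

section Drift

variable {n d : ℕ}

theorem sum_norm_blkOf_rpow_le {α M e : ℝ} (hα : 0 ≤ α) (hM : 0 ≤ M) (he : 0 ≤ e)
    {w : Fin n × Fin d → ℝ} (hw : ∀ k : Fin n, ‖blkOf n d w k‖ ≤ M ^ (1 + α * (k : ℕ)))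
    (s : Finset (Fin n)) : ∑ k ∈ s, ‖blkOf n d w k‖ ^ (e / (1 + α * (k : ℕ))) ≤ n * M ^ e := by
  calc ∑ k ∈ s, ‖blkOf n d w k‖ ^ (e / (1 + α * (k : ℕ))) ≤ s.card • M ^ e :=
        Finset.sum_le_card_nsmul _ _ _ fun k _ =>
          rpow_div_le_of_le_rpow (norm_nonneg _) hM he (by positivity) (hw k)
    _ ≤ n * M ^ e := by
      rw [nsmul_eq_mul]
      gcongr
      exact_mod_cast (Finset.card_le_univ s).trans_eq (Fintype.card_fin n)

theorem norm_blkOf_sub_le_of_holder (hn : 1 ≤ n) {α β T K : ℝ} (hα : 0 ≤ α) (hβ : 0 ≤ β)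
    (hK : 0 ≤ K) {F : ℝ → (Fin n × Fin d → ℝ) → (Fin n × Fin d → ℝ)}
    (hF1 : ∀ t ∈ Set.Icc (0 : ℝ) T, ∀ x x' : Fin n × Fin d → ℝ,
      ‖blkOf n d (F t x - F t x') ⟨0, hn⟩‖ ≤
        K * ∑ k : Fin n, ‖blkOf n d (x - x') k‖ ^ (β / (1 + α * (k : ℕ))))
    (hFi : ∀ i : Fin n, 1 ≤ (i : ℕ) → ∀ t ∈ Set.Icc (0 : ℝ) T, ∀ x x' : Fin n × Fin d → ℝ,
      ‖blkOf n d (F t x - F t x') i‖ ≤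
        K * ∑ k ∈ Finset.univ.filter (fun k : Fin n => i ≤ k),
          ‖blkOf n d (x - x') k‖ ^ ((1 + α * ((i : ℕ) - 1 : ℝ) + β) / (1 + α * (k : ℕ))))
    {t M : ℝ} (ht : t ∈ Icc 0 T) (hM : 0 ≤ M) {w w' : Fin n × Fin d → ℝ}
    (hw : ∀ k : Fin n, ‖blkOf n d (w - w') k‖ ≤ M ^ (1 + α * (k : ℕ))) (i : Fin n) :
    ‖blkOf n d (F t w - F t w') i‖ ≤ K * n * M ^ holderExp α β i := by
  have hsum := sum_norm_blkOf_rpow_le hα hM (holderExp_nonneg hα hβ i) hw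
  rw [mul_assoc]
  by_cases hi : (i : ℕ) = 0
  · obtain rfl : i = ⟨0, hn⟩ := Fin.ext hi
    rw [holderExp, if_pos rfl] at hsum ⊢
    exact (hF1 t ht w w').trans (mul_le_mul_of_nonneg_left (hsum _) hK)
  · rw [holderExp, if_neg hi] at hsum ⊢
    exact (hFi i (Nat.one_le_iff_ne_zero.2 hi) t ht w w').trans
      (mul_le_mul_of_nonneg_left (hsum _) hK)

theorem norm_blkOf_drift_sub_le (hn : 1 ≤ n) {α β T K : ℝ} (hα : 0 ≤ α) (hβ : 0 ≤ β)
    (hK : 0 ≤ K) {A : Matrix (Fin n × Fin d) (Fin n × Fin d) ℝ}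
    (hA : ∀ (i j : Fin n) (a b : Fin d), (j : ℕ) + 1 ≠ (i : ℕ) → A (i, a) (j, b) = 0)
    {F : ℝ → (Fin n × Fin d → ℝ) → (Fin n × Fin d → ℝ)}
    (hF1 : ∀ t ∈ Set.Icc (0 : ℝ) T, ∀ x x' : Fin n × Fin d → ℝ,
      ‖blkOf n d (F t x - F t x') ⟨0, hn⟩‖ ≤
        K * ∑ k : Fin n, ‖blkOf n d (x - x') k‖ ^ (β / (1 + α * (k : ℕ))))
    (hFi : ∀ i : Fin n, 1 ≤ (i : ℕ) → ∀ t ∈ Set.Icc (0 : ℝ) T, ∀ x x' : Fin n × Fin d → ℝ,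
      ‖blkOf n d (F t x - F t x') i‖ ≤
        K * ∑ k ∈ Finset.univ.filter (fun k : Fin n => i ≤ k),
          ‖blkOf n d (x - x') k‖ ^ ((1 + α * ((i : ℕ) - 1 : ℝ) + β) / (1 + α * (k : ℕ))))
    {t M : ℝ} (ht : t ∈ Icc 0 T) (hM : 0 ≤ M) {w w' : Fin n × Fin d → ℝ}
    (hw : ∀ k : Fin n, ‖blkOf n d (w - w') k‖ ≤ M ^ (1 + α * (k : ℕ))) (i : Fin n) :
    ‖blkOf n d (A *ᵥ (w - w') + (F t w - F t w')) i‖ ≤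
      ((∑ p, ∑ p', |A p p'|) + K * n) * (M ^ (1 + α * (i : ℕ) - α) + M ^ holderExp α β i) := by
  have hlin : ‖blkOf n d (A *ᵥ (w - w')) i‖ ≤ (∑ p, ∑ p', |A p p'|) * M ^ (1 + α * (i : ℕ) - α) :=
    norm_blkOf_mulVec_le hA (Real.rpow_nonneg hM _) fun j hj => by
      have hji : (1 : ℝ) + α * (j : ℕ) = 1 + α * (i : ℕ) - α := by
        rw [← hj]
        push_cast
        ring
      exact hji ▸ hw j
  have hnl := norm_blkOf_sub_le_of_holder hn hα hβ hK hF1 hFi ht hM hw i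
  have hA0 : 0 ≤ ∑ p, ∑ p', |A p p'| := by positivity
  have hX := Real.rpow_nonneg hM (1 + α * (i : ℕ) - α)
  have hY := Real.rpow_nonneg hM (holderExp α β i)
  rw [blkOf_add]
  refine (norm_add_le _ _).trans ?_
  nlinarith [mul_nonneg hA0 hY, mul_nonneg (mul_nonneg hK (Nat.cast_nonneg n : (0 : ℝ) ≤ n)) hX]

end Drift

namespace IsFlow

variable {n d : ℕ} {T t : ℝ} {A : Matrix (Fin n × Fin d) (Fin n × Fin d) ℝ}
  {F : ℝ → (Fin n × Fin d → ℝ) → (Fin n × Fin d → ℝ)} {x x' : Fin n × Fin d → ℝ}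
  {θ θ' : ℝ → Fin n × Fin d → ℝ}

theorem apply_start (hθ : IsFlow n d T A F t x θ) (htT : t ≤ T) : θ t = x := by
  simpa using hθ.2 t ⟨le_rfl, htT⟩

theorem continuousOn_drift
    (hFc : ContinuousOn (fun p : ℝ × (Fin n × Fin d → ℝ) => F p.1 p.2) (Icc 0 T ×ˢ univ))
    (ht : 0 ≤ t) (hθ : IsFlow n d T A F t x θ) :
    ContinuousOn (fun v => A *ᵥ θ v + F v (θ v)) (Icc t T) :=
  ((Matrix.mulVecLin A).continuous_of_finiteDimensional.comp_continuousOn hθ.1).add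
    (hFc.comp (continuousOn_id.prodMk hθ.1) fun _ hv => ⟨⟨ht.trans hv.1, hv.2⟩, trivial⟩)

theorem continuousOn_norm_blkOf_sub (hθ : IsFlow n d T A F t x θ)
    (hθ' : IsFlow n d T A F t x' θ') (k : Fin n) {s : ℝ} (hsT : s ≤ T) :
    ContinuousOn (fun v => ‖blkOf n d (θ v - θ' v) k‖) (Icc t s) :=
  ((blkOfCLM n d k).continuous.comp_continuousOn
    ((hθ.1.sub hθ'.1).mono (Icc_subset_Icc_right hsT))).norm

theorem norm_blkOf_sub_le
    (hFc : ContinuousOn (fun p : ℝ × (Fin n × Fin d → ℝ) => F p.1 p.2) (Icc 0 T ×ˢ univ))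
    (ht : 0 ≤ t) (hθ : IsFlow n d T A F t x θ) (hθ' : IsFlow n d T A F t x' θ') {r : ℝ}
    (hr : r ∈ Icc t T) (i : Fin n) {M : ℝ}
    (hM : ∀ v ∈ Icc t r, ‖blkOf n d (A *ᵥ (θ v - θ' v) + (F v (θ v) - F v (θ' v))) i‖ ≤ M) :
    ‖blkOf n d (θ r - θ' r) i‖ ≤ ‖blkOf n d (θ t - θ' t) i‖ + (r - t) * M := by
  have hsub : uIcc t r ⊆ Icc t T := by
    rw [uIcc_of_le hr.1]
    exact Icc_subset_Icc_right hr.2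
  have hint := ((hθ.continuousOn_drift hFc ht).mono hsub).intervalIntegrable (μ := volume)
  have hint' := ((hθ'.continuousOn_drift hFc ht).mono hsub).intervalIntegrable (μ := volume)
  have hG : (fun v => A *ᵥ (θ v - θ' v) + (F v (θ v) - F v (θ' v))) =
      fun v => (A *ᵥ θ v + F v (θ v)) - (A *ᵥ θ' v + F v (θ' v)) := by
    funext v
    rw [Matrix.mulVec_sub]
    abel
  have hδ : θ r - θ' r = (θ t - θ' t) +
      ∫ v in t..r, (A *ᵥ (θ v - θ' v) + (F v (θ v) - F v (θ' v))) := by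
    rw [hG, intervalIntegral.integral_sub hint hint', hθ.apply_start (hr.1.trans hr.2),
      hθ'.apply_start (hr.1.trans hr.2), hθ.2 r hr, hθ'.2 r hr]
    abel
  rw [hδ, blkOf_add, ← blkOfCLM_apply i (∫ v in t..r, _),
    ← (blkOfCLM n d i).intervalIntegral_comp_comm (hG ▸ hint.sub hint')]
  refine (norm_add_le _ _).trans (add_le_add_right ?_ _)
  rw [mul_comm, ← abs_of_nonneg (sub_nonneg.2 hr.1)]
  refine intervalIntegral.norm_integral_le_of_norm_le_const fun v hv => hM v ?_
  rw [uIoc_of_le hr.1] at hv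
  exact Ioc_subset_Icc_self hv

end IsFlow

theorem flow_componentwise_sensitivity_general (n d : ℕ) (hn : 1 ≤ n)
    (α β T : ℝ) (hα : α ∈ Set.Ioo (0 : ℝ) 2) (hβ : β ∈ Set.Ioo (0 : ℝ) 1)
    (hαβ : α + β ∈ Set.Ioo (1 : ℝ) 2) (hβα : β < α) (hT1 : T ≤ 1)
    (A : Matrix (Fin n × Fin d) (Fin n × Fin d) ℝ)
    (hA : ∀ (i j : Fin n) (a b : Fin d), (j : ℕ) + 1 ≠ (i : ℕ) → A (i, a) (j, b) = 0)
    (F : ℝ → (Fin n × Fin d → ℝ) → (Fin n × Fin d → ℝ))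
    (hFc : ContinuousOn (fun p : ℝ × (Fin n × Fin d → ℝ) => F p.1 p.2)
      (Set.Icc 0 T ×ˢ Set.univ))
    (K : ℝ) (hK : 0 ≤ K)
    (hF1 : ∀ t ∈ Set.Icc (0 : ℝ) T, ∀ x x' : Fin n × Fin d → ℝ,
      ‖blkOf n d (F t x - F t x') ⟨0, hn⟩‖ ≤
        K * ∑ k : Fin n, ‖blkOf n d (x - x') k‖ ^ (β / (1 + α * (k : ℕ))))
    (hFi : ∀ i : Fin n, 1 ≤ (i : ℕ) → ∀ t ∈ Set.Icc (0 : ℝ) T, ∀ x x' : Fin n × Fin d → ℝ,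
      ‖blkOf n d (F t x - F t x') i‖ ≤
        K * ∑ k ∈ Finset.univ.filter (fun k : Fin n => i ≤ k),
          ‖blkOf n d (x - x') k‖ ^ ((1 + α * ((i : ℕ) - 1 : ℝ) + β) / (1 + α * (k : ℕ)))) :
    ∃ C : ℝ, 1 ≤ C ∧
      ∀ t s : ℝ, t ∈ Set.Icc 0 T → s ∈ Set.Icc 0 T → t < s →
      ∀ x x' : Fin n × Fin d → ℝ, anisoDist n d α x x' ≤ 1 →
      ∀ θ θ' : ℝ → Fin n × Fin d → ℝ,
        IsFlow n d T A F t x θ → IsFlow n d T A F t x' θ' →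
        ∀ i : Fin n,
          ‖blkOf n d (θ s - θ' s) i‖ ≤
            C * ((s - t) ^ ((1 + α * (i : ℕ)) / α) +
              anisoDist n d α x x' ^ (1 + α * (i : ℕ))) := by
  obtain ⟨hα0, -⟩ := hα
  obtain ⟨hβ0, hβ1⟩ := hβ
  have hγ : 0 < min (α - β) (1 - β) := lt_min (by linarith) (by linarith)
  obtain ⟨C₀, hC₀, hcC₀⟩ : ∃ C₀ : ℝ, 4 ≤ C₀ ∧
      12 * ((∑ p, ∑ p', |A p p'|) + K * n) ≤ C₀ ^ min (α - β) (1 - β) :=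
    ((eventually_ge_atTop 4).and ((tendsto_rpow_atTop hγ).eventually_ge_atTop _)).exists
  have hq : ∀ k : Fin n, 1 ≤ 1 + α * (k : ℕ) := fun k => le_add_of_nonneg_right (by positivity)
  refine ⟨(2 * C₀) ^ (1 + α * n), Real.one_le_rpow (by linarith) (by positivity), ?_⟩
  intro t s ht hs hts x x' hD θ θ' hθ hθ' i
  have key := le_rpow_of_increment_le (u := fun v k => ‖blkOf n d (θ v - θ' v) k‖)
    (p := fun k : Fin n => holderExp α β k) hα0 (by linarith [ht.1, hs.2])
    (anisoDist_nonneg α x x') hD hq ((min_le_left _ _).trans (by linarith))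
    (fun k => le_add_holderExp hαβ.1.le hβ0.le k)
    (fun k => holderExp_le_sub (min_le_left _ _) (min_le_right _ _) k)
    (fun k => add_holderExp_le hαβ.2.le hβ1.le k) (by positivity) hcC₀ hC₀
    (fun k => hθ.continuousOn_norm_blkOf_sub hθ' k hs.2)
    (fun k => by
      simp only [hθ.apply_start (hts.le.trans hs.2), hθ'.apply_start (hts.le.trans hs.2)]
      exact norm_blkOf_sub_le_anisoDist_rpow hα0.le x x' k)
    (fun r hr M hM hbound i => hθ.norm_blkOf_sub_le hFc ht.1 hθ' ⟨hr.1, hr.2.trans hs.2⟩ i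
      fun v hv => norm_blkOf_drift_sub_le hn hα0.le hβ0.le hK hA hF1 hFi
        ⟨ht.1.trans hv.1, hv.2.trans (hr.2.trans hs.2)⟩ hM (hbound v hv) i)
    s ⟨hts.le, le_rfl⟩ i
  calc _ ≤ _ := key
    _ ≤ _ := mul_add_rpow_le (Q := 1 + α * n) (by linarith)
        (Real.rpow_nonneg (sub_nonneg.2 hts.le) _) (anisoDist_nonneg α x x') (hq i)
        (by gcongr; exact_mod_cast i.is_lt.le)
    _ = _ := by rw [← Real.rpow_mul (sub_nonneg.2 hts.le), inv_mul_eq_div]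

/-- Componentwise sensitivity of the flows: for any two flows started from `x` and `x'`
at time `t`, and for every level `i`,
`|(θ_{t,s}(x) - θ_{t,s}(x'))_i| ≤ C [(s-t)^{(1+α(i-1))/α} + d(x,x')^{1+α(i-1)}]`,
with `C` depending only on the data `n, d, α, β, A, K`. -/
theorem flow_componentwise_sensitivity (n d : ℕ) (hn : 1 ≤ n) (hd : 1 ≤ d)
    (α β T : ℝ) (hα : α ∈ Set.Ioo (0 : ℝ) 2) (hβ : β ∈ Set.Ioo (0 : ℝ) 1)
    (hαβ : α + β ∈ Set.Ioo (1 : ℝ) 2) (hβα : β < α) (hT0 : 0 < T) (hT1 : T ≤ 1)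
    (A : Matrix (Fin n × Fin d) (Fin n × Fin d) ℝ)
    (hA : ∀ (i j : Fin n) (a b : Fin d), (j : ℕ) + 1 ≠ (i : ℕ) → A (i, a) (j, b) = 0)
    (F : ℝ → (Fin n × Fin d → ℝ) → (Fin n × Fin d → ℝ))
    (hFc : ContinuousOn (fun p : ℝ × (Fin n × Fin d → ℝ) => F p.1 p.2)
      (Set.Icc 0 T ×ˢ Set.univ))
    (hFstruct : ∀ (i : Fin n) (t : ℝ) (x y : Fin n × Fin d → ℝ),
      (∀ k : Fin n, i ≤ k → blkOf n d x k = blkOf n d y k) →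
      blkOf n d (F t x) i = blkOf n d (F t y) i)
    (K : ℝ) (hK : 0 ≤ K)
    (hF1 : ∀ t ∈ Set.Icc (0 : ℝ) T, ∀ x x' : Fin n × Fin d → ℝ,
      ‖blkOf n d (F t x - F t x') ⟨0, hn⟩‖ ≤
        K * ∑ k : Fin n, ‖blkOf n d (x - x') k‖ ^ (β / (1 + α * (k : ℕ))))
    (hFi : ∀ i : Fin n, 1 ≤ (i : ℕ) → ∀ t ∈ Set.Icc (0 : ℝ) T, ∀ x x' : Fin n × Fin d → ℝ,
      ‖blkOf n d (F t x - F t x') i‖ ≤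
        K * ∑ k ∈ Finset.univ.filter (fun k : Fin n => i ≤ k),
          ‖blkOf n d (x - x') k‖ ^ ((1 + α * ((i : ℕ) - 1 : ℝ) + β) / (1 + α * (k : ℕ)))) :
    ∃ C : ℝ, 1 ≤ C ∧
      ∀ t s : ℝ, t ∈ Set.Icc 0 T → s ∈ Set.Icc 0 T → t < s →
      ∀ x x' : Fin n × Fin d → ℝ, anisoDist n d α x x' ≤ 1 →
      ∀ θ θ' : ℝ → Fin n × Fin d → ℝ,
        IsFlow n d T A F t x θ → IsFlow n d T A F t x' θ' →
        ∀ i : Fin n,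
          ‖blkOf n d (θ s - θ' s) i‖ ≤
            C * ((s - t) ^ ((1 + α * (i : ℕ)) / α) +
              anisoDist n d α x x' ^ (1 + α * (i : ℕ))) :=
  flow_componentwise_sensitivity_general n d hn α β T hα hβ hαβ hβα hT1 A hA F hFc K hK hF1 hFi
end

section
/- Let n, d ≥ 1 be integers, α ∈ (0,2), and let A be an nd×nd real matrix whose d×d blocks A_{i,j} vanish unless j = i−1 (sub-diagonal block structure). For h > 0 let M_h denote the block-diagonal nd×nd matrix whose i-th d×d diagonal block is h^{i−1} I_{d×d}. Then there exists a constant C, depending only on A, n, d and α, such that for every h > 0 and every w = (w_1,…,w_n) ∈ ℝ^{nd} satisfying |w_j| ≤ h^{(1+α(j−1))/α} for every j ∈ {1,…,n}, one has |M_h^{−1} e^{Ah} w| ≤ C h^{1/α}. In particular, if x, x' ∈ ℝ^{nd} satisfy Σ_{j=1}^n |(x−x')_j|^{1/(1+α(j−1))} ≤ (s−t)^{1/α} for some s > t, then |M_{s−t}^{−1} e^{A(s−t)} (x − x')| ≤ C (s−t)^{1/α}. -/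
/-- The Euclidean norm of a point of `ℝ^{nd}`. -/
noncomputable def enorm (n d : ℕ) (v : Fin n × Fin d → ℝ) : ℝ :=
  ‖(EuclideanSpace.equiv (Fin n × Fin d) ℝ).symm v‖

/-- The block-diagonal scaling matrix `M_h` whose `i`-th d×d diagonal block is `h^{i-1} I`. -/
noncomputable def scaleMat (n d : ℕ) (h : ℝ) :
    Matrix (Fin n × Fin d) (Fin n × Fin d) ℝ :=
  Matrix.diagonal (fun p => h ^ (p.1 : ℕ))

/-! Because `A` only maps the `j`-th block to the `(j+1)`-th one, `(h • A) M_h = M_h A`, so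
`e^{hA} = M_h e^A M_h⁻¹` and `M_h⁻¹ e^{hA} w = e^A (M_h⁻¹ w)`. The hypothesis on `w` says
exactly that every block of `M_h⁻¹ w` has norm at most `h^{1/α}`, and `e^A` is a fixed bounded
operator. The second claim reduces to the first since each summand of
`Σ_j |(x-x')_j|^{1/(1+αj)}` is bounded by the sum. -/

theorem le_rpow_of_sum_rpow_one_div_le {ι : Type*} [Fintype ι] {f p : ι → ℝ} {T : ℝ}
    (hf : ∀ i, 0 ≤ f i) (hp : ∀ i, 0 < p i) (hT : ∑ i, f i ^ (1 / p i) ≤ T) (j : ι) :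
    f j ≤ T ^ p j := by
  have hj : f j ^ (1 / p j) ≤ T :=
    (Finset.single_le_sum (f := fun i => f i ^ (1 / p i))
      (fun i _ => Real.rpow_nonneg (hf i) _) (Finset.mem_univ j)).trans hT
  calc f j = (f j ^ (1 / p j)) ^ p j := by
        rw [← Real.rpow_mul (hf j), one_div_mul_cancel (hp j).ne', Real.rpow_one]
    _ ≤ T ^ p j := Real.rpow_le_rpow (Real.rpow_nonneg (hf j) _) hj (hp j).le

section Blocks

open scoped Matrix

variable {n d : ℕ}

theorem enorm_sq_eq_sum_blkOf (v : Fin n × Fin d → ℝ) :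
    enorm n d v ^ 2 = ∑ j, ‖blkOf n d v j‖ ^ 2 := by
  simp only [_root_.enorm, blkOf, EuclideanSpace.norm_sq_eq, Fintype.sum_prod_type]
  rfl

theorem enorm_le_of_blkOf_le {v : Fin n × Fin d → ℝ} {K : ℝ} (hK : 0 ≤ K)
    (hv : ∀ j, ‖blkOf n d v j‖ ≤ K) : enorm n d v ≤ √n * K := by
  rw [← Real.sqrt_sq hK, ← Real.sqrt_mul (Nat.cast_nonneg n)]
  refine Real.le_sqrt_of_sq_le ?_
  rw [enorm_sq_eq_sum_blkOf]
  calc ∑ j, ‖blkOf n d v j‖ ^ 2 ≤ ∑ _j : Fin n, K ^ 2 :=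
        Finset.sum_le_sum fun j _ => pow_le_pow_left₀ (norm_nonneg _) (hv j) 2
    _ = n * K ^ 2 := by simp

open scoped Matrix.Norms.L2Operator in
theorem enorm_mulVec_le (B : Matrix (Fin n × Fin d) (Fin n × Fin d) ℝ)
    (v : Fin n × Fin d → ℝ) :
    enorm n d (B *ᵥ v) ≤ ‖B‖ * enorm n d v :=
  B.l2_opNorm_mulVec ((EuclideanSpace.equiv (Fin n × Fin d) ℝ).symm v)

theorem blkOf_scaleMat_mulVec (h : ℝ) (v : Fin n × Fin d → ℝ) (j : Fin n) :
    blkOf n d (scaleMat n d h *ᵥ v) j = h ^ (j : ℕ) • blkOf n d v j := by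
  ext a
  simp [blkOf, scaleMat, Matrix.mulVec_diagonal]

theorem scaleMat_mul_scaleMat (h k : ℝ) :
    scaleMat n d h * scaleMat n d k = scaleMat n d (h * k) := by
  simp only [scaleMat, Matrix.diagonal_mul_diagonal, mul_pow]

theorem scaleMat_one : scaleMat n d 1 = 1 := by
  simp [scaleMat]

theorem inv_scaleMat {h : ℝ} (hh : h ≠ 0) : (scaleMat n d h)⁻¹ = scaleMat n d h⁻¹ :=
  Matrix.inv_eq_right_inv (by rw [scaleMat_mul_scaleMat, mul_inv_cancel₀ hh, scaleMat_one])

theorem isUnit_scaleMat {h : ℝ} (hh : h ≠ 0) : IsUnit (scaleMat n d h) :=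
  Matrix.isUnit_diagonal.mpr (Pi.isUnit_iff.mpr fun _ => (pow_ne_zero _ hh).isUnit)

def IsBlockSubdiag (A : Matrix (Fin n × Fin d) (Fin n × Fin d) ℝ) : Prop :=
  ∀ (i j : Fin n) (a b : Fin d), (j : ℕ) + 1 ≠ (i : ℕ) → A (i, a) (j, b) = 0

theorem IsBlockSubdiag.smul_mul_scaleMat {A : Matrix (Fin n × Fin d) (Fin n × Fin d) ℝ}
    (hA : IsBlockSubdiag A) (h : ℝ) : (h • A) * scaleMat n d h = scaleMat n d h * A := by
  ext ⟨i, a⟩ ⟨j, b⟩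
  simp only [scaleMat, Matrix.mul_diagonal, Matrix.diagonal_mul, Matrix.smul_apply, smul_eq_mul]
  by_cases hij : (j : ℕ) + 1 = i
  · rw [← hij, pow_succ]; ring
  · rw [hA i j a b hij]; ring

theorem IsBlockSubdiag.exp_smul {A : Matrix (Fin n × Fin d) (Fin n × Fin d) ℝ}
    (hA : IsBlockSubdiag A) {h : ℝ} (hh : h ≠ 0) :
    NormedSpace.exp (h • A) = scaleMat n d h * NormedSpace.exp A * (scaleMat n d h)⁻¹ := by
  have hU := isUnit_scaleMat (n := n) (d := d) hh
  rw [← Matrix.exp_conj _ _ hU, ← hA.smul_mul_scaleMat,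
    Matrix.mul_nonsing_inv_cancel_right _ _ ((Matrix.isUnit_iff_isUnit_det _).mp hU)]

open scoped Matrix.Norms.L2Operator in
theorem IsBlockSubdiag.enorm_inv_scaleMat_exp_mulVec_le
    {A : Matrix (Fin n × Fin d) (Fin n × Fin d) ℝ} (hA : IsBlockSubdiag A) {h K : ℝ}
    (hh : 0 < h) (hK : 0 ≤ K) {w : Fin n × Fin d → ℝ}
    (hw : ∀ j, ‖blkOf n d w j‖ ≤ h ^ (j : ℕ) * K) :
    enorm n d ((scaleMat n d h)⁻¹ *ᵥ (NormedSpace.exp (h • A) *ᵥ w)) ≤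
      ‖NormedSpace.exp A‖ * (√n * K) := by
  have hU : IsUnit (scaleMat n d h).det :=
    (Matrix.isUnit_iff_isUnit_det _).mp (isUnit_scaleMat hh.ne')
  rw [hA.exp_smul hh.ne', Matrix.mulVec_mulVec, Matrix.mul_assoc,
    Matrix.nonsing_inv_mul_cancel_left _ _ hU,
    ← Matrix.mulVec_mulVec, inv_scaleMat hh.ne']
  refine (enorm_mulVec_le _ _).trans (mul_le_mul_of_nonneg_left ?_ (norm_nonneg _))
  refine enorm_le_of_blkOf_le hK fun j => ?_
  rw [blkOf_scaleMat_mulVec, norm_smul, norm_pow, norm_inv, Real.norm_of_nonneg hh.le, inv_pow,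
    inv_mul_le_iff₀ (by positivity)]
  exact hw j

open scoped Matrix.Norms.L2Operator in
theorem IsBlockSubdiag.enorm_inv_scaleMat_exp_mulVec_le_rpow
    {A : Matrix (Fin n × Fin d) (Fin n × Fin d) ℝ} (hA : IsBlockSubdiag A) {α h : ℝ}
    (hα : 0 < α) (hh : 0 < h) {w : Fin n × Fin d → ℝ}
    (hw : ∀ j : Fin n, ‖blkOf n d w j‖ ≤ h ^ ((1 + α * (j : ℕ)) / α)) :
    enorm n d ((scaleMat n d h)⁻¹ *ᵥ (NormedSpace.exp (h • A) *ᵥ w)) ≤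
      ‖NormedSpace.exp A‖ * (√n * h ^ (1 / α)) := by
  have hsplit (j : ℕ) : h ^ ((1 + α * j) / α) = h ^ j * h ^ (1 / α) := by
    rw [← Real.rpow_natCast, ← Real.rpow_add hh]
    congr 1
    field_simp
    ring
  exact hA.enorm_inv_scaleMat_exp_mulVec_le hh (by positivity)
    fun j => (hw j).trans_eq (hsplit j)

end Blocks

theorem scaleMat_inv_exp_bound_general (n d : ℕ)
    (α : ℝ) (hα : α ∈ Set.Ioo (0 : ℝ) 2)
    (A : Matrix (Fin n × Fin d) (Fin n × Fin d) ℝ)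
    (hA : ∀ (i j : Fin n) (a b : Fin d), (j : ℕ) + 1 ≠ (i : ℕ) → A (i, a) (j, b) = 0) :
    ∃ C : ℝ, 0 < C ∧
      (∀ h : ℝ, 0 < h → ∀ w : Fin n × Fin d → ℝ,
        (∀ j : Fin n, ‖blkOf n d w j‖ ≤ h ^ ((1 + α * (j : ℕ)) / α)) →
        enorm n d ((scaleMat n d h)⁻¹.mulVec
          ((NormedSpace.exp (h • A)).mulVec w)) ≤ C * h ^ (1 / α)) ∧
      ∀ s t : ℝ, t < s → ∀ x x' : Fin n × Fin d → ℝ,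
        (∑ j : Fin n, ‖blkOf n d (x - x') j‖ ^ (1 / (1 + α * (j : ℕ)))) ≤
          (s - t) ^ (1 / α) →
        enorm n d ((scaleMat n d (s - t))⁻¹.mulVec
          ((NormedSpace.exp ((s - t) • A)).mulVec (x - x'))) ≤ C * (s - t) ^ (1 / α) := by
  open scoped Matrix Matrix.Norms.L2Operator in
  obtain ⟨hα0, -⟩ := hα
  set C := ‖NormedSpace.exp A‖ * √n + 1
  have hbound {h : ℝ} (hh : 0 < h) {w : Fin n × Fin d → ℝ}
      (hw : ∀ j : Fin n, ‖blkOf n d w j‖ ≤ h ^ ((1 + α * (j : ℕ)) / α)) :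
      enorm n d ((scaleMat n d h)⁻¹ *ᵥ (NormedSpace.exp (h • A) *ᵥ w)) ≤ C * h ^ (1 / α) :=
    calc _ ≤ ‖NormedSpace.exp A‖ * (√n * h ^ (1 / α)) :=
          IsBlockSubdiag.enorm_inv_scaleMat_exp_mulVec_le_rpow hA hα0 hh hw
      _ ≤ C * h ^ (1 / α) := by
          rw [← mul_assoc]
          gcongr
          linarith
  refine ⟨C, by positivity, fun h hh w hw => hbound hh hw, fun s t hts x x' hx => ?_⟩
  have hst : 0 < s - t := sub_pos.mpr hts
  refine hbound hst fun j => ?_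
  have hp (i : Fin n) : 0 < 1 + α * (i : ℕ) := by positivity
  refine (le_rpow_of_sum_rpow_one_div_le (fun _ => norm_nonneg _) hp hx j).trans_eq ?_
  rw [← Real.rpow_mul hst.le, one_div_mul_eq_div]

/-- For a sub-diagonal block matrix `A`: if `|w_j| ≤ h^{(1+α(j-1))/α}` for every block `j`,
then `|M_h⁻¹ e^{Ah} w| ≤ C h^{1/α}`; in particular if
`Σ_j |(x-x')_j|^{1/(1+α(j-1))} ≤ (s-t)^{1/α}` then
`|M_{s-t}⁻¹ e^{A(s-t)} (x-x')| ≤ C (s-t)^{1/α}`. -/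
theorem scaleMat_inv_exp_bound (n d : ℕ) (hn : 1 ≤ n) (hd : 1 ≤ d)
    (α : ℝ) (hα : α ∈ Set.Ioo (0 : ℝ) 2)
    (A : Matrix (Fin n × Fin d) (Fin n × Fin d) ℝ)
    (hA : ∀ (i j : Fin n) (a b : Fin d), (j : ℕ) + 1 ≠ (i : ℕ) → A (i, a) (j, b) = 0) :
    ∃ C : ℝ, 0 < C ∧
      (∀ h : ℝ, 0 < h → ∀ w : Fin n × Fin d → ℝ,
        (∀ j : Fin n, ‖blkOf n d w j‖ ≤ h ^ ((1 + α * (j : ℕ)) / α)) →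
        enorm n d ((scaleMat n d h)⁻¹.mulVec
          ((NormedSpace.exp (h • A)).mulVec w)) ≤ C * h ^ (1 / α)) ∧
      ∀ s t : ℝ, t < s → ∀ x x' : Fin n × Fin d → ℝ,
        (∑ j : Fin n, ‖blkOf n d (x - x') j‖ ^ (1 / (1 + α * (j : ℕ)))) ≤
          (s - t) ^ (1 / α) →
        enorm n d ((scaleMat n d (s - t))⁻¹.mulVec
          ((NormedSpace.exp ((s - t) • A)).mulVec (x - x'))) ≤ C * (s - t) ^ (1 / α) :=
  scaleMat_inv_exp_bound_general n d α hα A hA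
end
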